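/- arXiv:1510.05130 — 2 statements merged into one kernel-verified Lean document; each statement's English description precedes it below -/
import Mathlib

section
/- Let F ∈ ℂ^{n×n} be a block upper triangular matrix with square diagonal blocks R₁₁, R₂₂, …, R_mm (i.e., F = [R_jk] with R_jk = 0 for j > k). If every diagonal block R_jj, j ∈ {1,…,m}, is an H-matrix, then F is an H-matrix. -/
open scoped BigOperators

noncomputable section

/-- Deleted `i`-th row sum of `|A|`, restricted to the index set `S`
    (i.e. `r_i^S(A) = ∑_{j ∈ S \ {i}} |a_{ij}|`). -/
def rowSumOn {ι : Type*} [Fintype ι] [DecidableEq ι]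
    (A : Matrix ι ι ℂ) (S : Finset ι) (i : ι) : ℝ :=
  ∑ j ∈ S.erase i, ‖A i j‖

/-- Deleted `i`-th row sum `r_i(A) = ∑_{j ≠ i} |a_{ij}|`. -/
def rowSum {ι : Type*} [Fintype ι] [DecidableEq ι]
    (A : Matrix ι ι ℂ) (i : ι) : ℝ :=
  rowSumOn A Finset.univ i

/-- `A` is strictly diagonally dominant (SDD). -/
def IsSDD {ι : Type*} [Fintype ι] [DecidableEq ι] (A : Matrix ι ι ℂ) : Prop :=
  ∀ i, rowSum A i < ‖A i i‖

/-- `A` is diagonally dominant (DD). -/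
def IsDD {ι : Type*} [Fintype ι] [DecidableEq ι] (A : Matrix ι ι ℂ) : Prop :=
  ∀ i, rowSum A i ≤ ‖A i i‖

/-- `A` is DD+ : diagonally dominant with at least one strictly dominant row. -/
def IsDDplus {ι : Type*} [Fintype ι] [DecidableEq ι] (A : Matrix ι ι ℂ) : Prop :=
  IsDD A ∧ ∃ i, rowSum A i < ‖A i i‖

/-- `A` is an H-matrix: there is a diagonal matrix `D` with positive diagonal
    entries such that `A * D` is SDD. -/
def IsHMatrix {ι : Type*} [Fintype ι] [DecidableEq ι] (A : Matrix ι ι ℂ) : Prop :=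
  ∃ d : ι → ℝ, (∀ i, 0 < d i) ∧ IsSDD (A * Matrix.diagonal fun i => (d i : ℂ))

/-- `T(A)`: the set of indices of non-SDD rows of `A`. -/
def TSet {ι : Type*} [Fintype ι] [DecidableEq ι] (A : Matrix ι ι ℂ) : Finset ι :=
  Finset.univ.filter fun i => ‖A i i‖ ≤ rowSum A i

/-- The principal submatrix `A|_{M²}` of `A` corresponding to the index set `M`. -/
def subMat {ι : Type*} [Fintype ι] [DecidableEq ι]
    (A : Matrix ι ι ℂ) (M : Finset ι) : Matrix {i // i ∈ M} {i // i ∈ M} ℂ :=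
  Matrix.of fun i j => A i.val j.val

/-- There exists a nonzero elements chain `a_{i₀i₁}, a_{i₁i₂}, …, a_{i_{r-1}i_r}`
    starting at `i₀` and ending at some `i_r ∉ T(A)`. -/
def HasChainOut {ι : Type*} [Fintype ι] [DecidableEq ι]
    (A : Matrix ι ι ℂ) (i₀ : ι) : Prop :=
  ∃ (r : ℕ) (c : Fin (r + 1) → ι), 0 < r ∧ c 0 = i₀ ∧
    (∀ k : Fin r, A (c k.castSucc) (c k.succ) ≠ 0) ∧ c (Fin.last r) ∉ TSet A

/-- `S` is an interwoven set of indices for `A`: `S` is a proper subset of `N`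
    and either `|S| ≤ 1`, or `|S| = s > 1` and there exist distinct
    `p₁,…,p_{s-1} ∈ S` and `q₁,…,q_{s-1}` with `q₁ ∈ N \ S`, `a_{p₁q₁} ≠ 0`, and
    `q_i ∈ (N \ S) ∪ {p₁,…,p_{i-1}}`, `a_{p_iq_i} ≠ 0` for `i = 2,…,s-1`. -/
def Interwoven {ι : Type*} [Fintype ι] [DecidableEq ι]
    (A : Matrix ι ι ℂ) (S : Finset ι) : Prop :=
  S ⊂ Finset.univ ∧
    (S.card ≤ 1 ∨
      (1 < S.card ∧ ∃ p q : Fin (S.card - 1) → ι,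
        Function.Injective p ∧ (∀ i, p i ∈ S) ∧
        ∀ i, A (p i) (q i) ≠ 0 ∧ (q i ∉ S ∨ ∃ j, j < i ∧ q i = p j)))

/-- The comparison matrix `ℳ(A)`. -/
def CompMat {ι : Type*} [Fintype ι] [DecidableEq ι] (A : Matrix ι ι ℂ) : Matrix ι ι ℝ :=
  Matrix.of fun i j => if i = j then ‖A i i‖ else -‖A i j‖

open Finset Filter Topology

/-!
Glue the weights that make the diagonal blocks strictly diagonally dominant into one
positive weight vector `e`, and multiply the weights of the `l`-th block by `t ^ l`. In row `i`
the entries of the diagonal block are rescaled together with the diagonal entry, the entries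
left of it vanish, and those right of it gain a further factor at most `t`; for small `t > 0`
the strict dominance of the diagonal block absorbs them.
-/

theorem exists_pos_le_one_forall_mul_lt {α : Type*} [Finite α] (B g : α → ℝ)
    (hg : ∀ a, 0 < g a) : ∃ t : ℝ, 0 < t ∧ t ≤ 1 ∧ ∀ a, t * B a < g a := by
  have hsmall : ∀ a, ∀ᶠ t in 𝓝[>] (0 : ℝ), t * B a < g a := fun a =>
    nhdsWithin_le_nhds <| (continuous_id.mul continuous_const).tendsto' 0 0 (zero_mul _)
      |>.eventually (gt_mem_nhds (hg a))
  have hunit : ∀ᶠ t in 𝓝[>] (0 : ℝ), t ∈ Set.Ioc 0 1 := Ioc_mem_nhdsGT one_pos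
  obtain ⟨t, ⟨ht0, ht1⟩, hB⟩ := (hunit.and (eventually_all.2 hsmall)).exists
  exact ⟨t, ht0, ht1, hB⟩

theorem norm_mul_pow_mul_le_of_blockTriangular {ι : Type*} {m : ℕ} {F : Matrix ι ι ℂ}
    {blk : ι → Fin m} (hzero : ∀ i j, blk j < blk i → F i j = 0) {e : ι → ℝ} (he : ∀ i, 0 ≤ e i)
    {t : ℝ} (ht0 : 0 ≤ t) (ht1 : t ≤ 1) (i j : ι) :
    ‖F i j‖ * (t ^ (blk j : ℕ) * e j) ≤
      t ^ (blk i : ℕ) * if blk j = blk i then ‖F i j‖ * e j else t * (‖F i j‖ * e j) := by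
  rcases lt_trichotomy (blk j) (blk i) with hlt | heq | hgt
  · simp [hzero i j hlt]
  · rw [if_pos heq, heq]
    exact (mul_left_comm _ _ _).le
  · rw [if_neg hgt.ne']
    calc ‖F i j‖ * (t ^ (blk j : ℕ) * e j) ≤ ‖F i j‖ * (t ^ ((blk i : ℕ) + 1) * e j) :=
          mul_le_mul_of_nonneg_left (mul_le_mul_of_nonneg_right
            (pow_le_pow_of_le_one ht0 ht1 hgt) (he j)) (norm_nonneg _)
      _ = t ^ (blk i : ℕ) * (t * (‖F i j‖ * e j)) := by ring

section

variable {ι : Type*} [Fintype ι] [DecidableEq ι]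

theorem isSDD_mul_diagonal_iff (A : Matrix ι ι ℂ) {d : ι → ℝ} (hd : ∀ i, 0 ≤ d i) :
    IsSDD (A * Matrix.diagonal fun i => (d i : ℂ)) ↔
      ∀ i, ∑ j ∈ univ.erase i, ‖A i j‖ * d j < ‖A i i‖ * d i := by
  simp only [IsSDD, rowSum, rowSumOn, Matrix.mul_diagonal, norm_mul, Complex.norm_real,
    Real.norm_of_nonneg (hd _)]

theorem isHMatrix_iff (A : Matrix ι ι ℂ) :
    IsHMatrix A ↔ ∃ d : ι → ℝ, (∀ i, 0 < d i) ∧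
      ∀ i, ∑ j ∈ univ.erase i, ‖A i j‖ * d j < ‖A i i‖ * d i :=
  exists_congr fun _ => and_congr_right fun hd => isSDD_mul_diagonal_iff A fun i => (hd i).le

theorem sum_erase_subtype_eq_sum_filter {p : ι → Prop} [DecidablePred p] {i : ι} (hi : p i)
    {M : Type*} [AddCommMonoid M] (f : ι → M) :
    ∑ j ∈ univ.erase (⟨i, hi⟩ : Subtype p), f j = ∑ j ∈ (univ.erase i).filter p, f j := by
  rw [← sum_subtype_eq_sum_filter]
  congr 1
  ext j
  simp [Subtype.ext_iff]

theorem exists_blockwise_dominant_weights {κ : Type*} [DecidableEq κ]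
    (F : Matrix ι ι ℂ) (blk : ι → κ)
    (hblocks : ∀ l, IsHMatrix (Matrix.of fun i j : {i // blk i = l} => F i.val j.val)) :
    ∃ e : ι → ℝ, (∀ i, 0 < e i) ∧
      ∀ i, ∑ j ∈ (univ.erase i).filter (fun j => blk j = blk i), ‖F i j‖ * e j <
        ‖F i i‖ * e i := by
  choose d hd hdom using fun l => (isHMatrix_iff _).1 (hblocks l)
  have hglue : ∀ l j (hj : blk j = l), d l ⟨j, hj⟩ = d (blk j) ⟨j, rfl⟩ := by
    rintro l j rfl; rfl
  refine ⟨fun i => d (blk i) ⟨i, rfl⟩, fun i => hd _ _, fun i => ?_⟩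
  rw [← sum_erase_subtype_eq_sum_filter (p := fun j => blk j = blk i) rfl]
  refine lt_of_eq_of_lt (sum_congr rfl fun j _ => ?_) (hdom (blk i) ⟨i, rfl⟩)
  rw [Matrix.of_apply, hglue _ _ j.2]

theorem isHMatrix_of_blockTriangular_of_weights {m : ℕ} (F : Matrix ι ι ℂ) (blk : ι → Fin m)
    (hzero : ∀ i j, blk j < blk i → F i j = 0) (e : ι → ℝ) (he : ∀ i, 0 < e i)
    (hdom : ∀ i, ∑ j ∈ (univ.erase i).filter (fun j => blk j = blk i), ‖F i j‖ * e j <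
      ‖F i i‖ * e i) :
    IsHMatrix F := by
  set S := fun i => ∑ j ∈ (univ.erase i).filter (fun j => blk j = blk i), ‖F i j‖ * e j
  set B := fun i => ∑ j ∈ (univ.erase i).filter (fun j => ¬blk j = blk i), ‖F i j‖ * e j
  obtain ⟨t, ht0, ht1, htB⟩ :=
    exists_pos_le_one_forall_mul_lt B (fun i => ‖F i i‖ * e i - S i) fun i => sub_pos.2 (hdom i)
  refine (isHMatrix_iff F).2
    ⟨fun i => t ^ (blk i : ℕ) * e i, fun i => mul_pos (pow_pos ht0 _) (he i), fun i => ?_⟩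
  calc ∑ j ∈ univ.erase i, ‖F i j‖ * (t ^ (blk j : ℕ) * e j)
      ≤ ∑ j ∈ univ.erase i, t ^ (blk i : ℕ) *
          if blk j = blk i then ‖F i j‖ * e j else t * (‖F i j‖ * e j) :=
        sum_le_sum fun j _ =>
          norm_mul_pow_mul_le_of_blockTriangular hzero (fun j => (he j).le) ht0.le ht1 i j
    _ = t ^ (blk i : ℕ) * (S i + t * B i) := by rw [← mul_sum, sum_ite, ← mul_sum]
    _ < t ^ (blk i : ℕ) * (‖F i i‖ * e i) := by gcongr; linarith [htB i]
    _ = ‖F i i‖ * (t ^ (blk i : ℕ) * e i) := mul_left_comm _ _ _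

end

theorem block_triangular_hmatrix_general (n m : ℕ)
    (F : Matrix (Fin n) (Fin n) ℂ) (blk : Fin n → Fin m)
    (hzero : ∀ i j : Fin n, blk j < blk i → F i j = 0)
    (hblocks : ∀ l : Fin m,
      IsHMatrix (Matrix.of fun i j : {i : Fin n // blk i = l} => F i.val j.val)) :
    IsHMatrix F := by
  obtain ⟨e, he, hdom⟩ := exists_blockwise_dominant_weights F blk hblocks
  exact isHMatrix_of_blockTriangular_of_weights F blk hzero e he hdom

/-- A block upper triangular matrix (with respect to a
partition of `{1,…,n}` into consecutive blocks, coded by a monotone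
surjection `blk : Fin n → Fin m`) whose diagonal blocks are all H-matrices,
is an H-matrix. -/
theorem block_triangular_hmatrix (n m : ℕ)
    (F : Matrix (Fin n) (Fin n) ℂ) (blk : Fin n → Fin m)
    (hmono : Monotone blk) (hsurj : Function.Surjective blk)
    (hzero : ∀ i j : Fin n, blk j < blk i → F i j = 0)
    (hblocks : ∀ l : Fin m,
      IsHMatrix (Matrix.of fun i j : {i : Fin n // blk i = l} => F i.val j.val)) :
    IsHMatrix F :=
  block_triangular_hmatrix_general n m F blk hzero hblocks

end
end

section
/- Let A = [a_ij] ∈ ℂ^{n×n}, n ≥ 2, be a DD matrix such that for each i₀ ∈ T(A) there exists a nonzero elements chain a_{i₀i₁}, a_{i₁i₂}, …, a_{i_{r-1}i_r} with i_r ∈ N \ T(A) (or T(A) = ∅). Then all diagonal entries of A are nonzero. -/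
open scoped BigOperators

noncomputable section

/-! A zero diagonal entry of a DD matrix forces its whole row to vanish; but such a row lies
in `T(A)`, so the chain condition provides a nonzero entry in it. -/

section

variable {ι : Type*} [Fintype ι] [DecidableEq ι] {A : Matrix ι ι ℂ} {i : ι}

theorem rowSum_nonneg (A : Matrix ι ι ℂ) (i : ι) : 0 ≤ rowSum A i :=
  Finset.sum_nonneg fun _ _ => norm_nonneg _

theorem norm_le_rowSum {j : ι} (hji : j ≠ i) : ‖A i j‖ ≤ rowSum A i :=
  Finset.single_le_sum (f := fun k => ‖A i k‖) (fun _ _ => norm_nonneg _)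
    (Finset.mem_erase.mpr ⟨hji, Finset.mem_univ j⟩)

theorem IsDD.eq_zero_of_diag_eq_zero (hA : IsDD A) (hi : A i i = 0) (j : ι) : A i j = 0 := by
  by_cases hji : j = i
  · rwa [hji]
  · have : ‖A i j‖ ≤ 0 := by simpa [hi] using (norm_le_rowSum hji).trans (hA i)
    exact norm_le_zero_iff.mp this

theorem mem_TSet_of_diag_eq_zero (hi : A i i = 0) : i ∈ TSet A := by
  simpa [TSet, hi] using rowSum_nonneg A i

theorem HasChainOut.exists_ne_zero (h : HasChainOut A i) : ∃ j, A i j ≠ 0 := by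
  obtain ⟨r, c, hr, hc0, hstep, -⟩ := h
  refine ⟨c (Fin.succ ⟨0, hr⟩), ?_⟩
  simpa [← hc0] using hstep ⟨0, hr⟩

end

theorem chain_condition_nonzero_diagonal_general (n : ℕ)
    (A : Matrix (Fin n) (Fin n) ℂ) (hDD : IsDD A)
    (hchain : TSet A = ∅ ∨ ∀ i₀ ∈ TSet A, HasChainOut A i₀) :
    ∀ i, A i i ≠ 0 := by
  intro i hii
  have hiT : i ∈ TSet A := mem_TSet_of_diag_eq_zero hii
  have hchain_i : HasChainOut A i :=
    hchain.elim (fun hempty => absurd hiT (by simp [hempty])) (· i hiT)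
  obtain ⟨j, hj⟩ := hchain_i.exists_ne_zero
  exact hj (hDD.eq_zero_of_diag_eq_zero hii j)

/-- A DD matrix `A ∈ ℂⁿˣⁿ`, `n ≥ 2`, satisfying the
Shivakumar–Chew chain condition has nonzero diagonal entries. -/
theorem chain_condition_nonzero_diagonal (n : ℕ) (hn : 2 ≤ n)
    (A : Matrix (Fin n) (Fin n) ℂ) (hDD : IsDD A)
    (hchain : TSet A = ∅ ∨ ∀ i₀ ∈ TSet A, HasChainOut A i₀) :
    ∀ i, A i i ≠ 0 :=
  chain_condition_nonzero_diagonal_general n A hDD hchain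

end
end
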